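/- arXiv:1611.02045 — 2 statements merged into one kernel-verified Lean document; each statement's English description precedes it below -/
import Mathlib

section
/- One step of the projected Forward Euler scheme with the Lagrange multiplier term, φ̃ = φ − Δt (Hφ − λ(φ)φ) followed by normalization, coincides with one step of the unprojected Forward Euler scheme φ̃' = φ − Δt' Hφ followed by normalization, where the effective time step is Δt' = Δt/(1 + Δt λ(φ)), provided 1 + Δt λ(φ) > 0. -/
open scoped InnerProductSpace

/-- One step of the projected Forward Euler scheme with the Lagrange multiplier term,
after normalization, equals one step of the unprojected Forward Euler scheme with
effective step `Δt' = Δt/(1 + Δt λ(φ))`, after normalization. -/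
theorem stmt4 {N : ℕ} (H : Matrix (Fin N) (Fin N) ℂ) (hH : H.IsHermitian)
    (φ : EuclideanSpace ℂ (Fin N)) (hφ : ‖φ‖ = 1) (Δt : ℝ) (hΔt : 0 < Δt)
    (lam : ℝ) (hlam : lam = (⟪φ, Matrix.toEuclideanLin H φ⟫_ℂ).re)
    (hpos : 0 < 1 + Δt * lam) :
    let Hφ := Matrix.toEuclideanLin H φ
    let φ₁ := φ - Δt • (Hφ - lam • φ)
    let φ₂ := φ - (Δt / (1 + Δt * lam)) • Hφ
    (1 / ‖φ₁‖) • φ₁ = (1 / ‖φ₂‖) • φ₂ := by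
  intro Hφ φ₁ φ₂
  set c : ℝ := 1 + Δt * lam with hc
  have hc0 : c ≠ 0 := ne_of_gt hpos
  have key : φ₁ = c • φ₂ := by
    show φ - Δt • (Hφ - lam • φ) = c • (φ - (Δt / c) • Hφ)
    rw [smul_sub (c:ℝ), smul_smul, mul_div_cancel₀ _ hc0, hc]
    module
  rw [key, norm_smul, Real.norm_eq_abs, abs_of_pos hpos, smul_smul]
  congr 1
  rcases eq_or_ne ‖φ₂‖ 0 with h | h
  · simp [h]
  · field_simp
end

section
/- Under power iteration with Hermitian A whose eigenvalues satisfy |μ_N| > |μ_i| for all i < N (the top eigenvalue simple in modulus), and with ⟨v_N, φ₀⟩ ≠ 0, the component along v_N converges: |⟨v_N, φ_n⟩| → 1 as n → ∞, and the error |1 − |⟨v_N, φ_n⟩|²| is O((max_{i<N}|μ_i|/|μ_N|)^{2n}). -/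
open scoped InnerProductSpace

set_option maxHeartbeats 1000000 in
/-- Convergence of the power iteration: if the top eigenvalue (in modulus) is simple
and the initial vector has a nonzero component along the top eigenvector, then
`|⟪v_N, φ_n⟫| → 1` and the error `|1 − |⟪v_N, φ_n⟫|²|` is
`O((max_{i<N}|μ_i| / |μ_N|)^{2n})`. -/
theorem stmt7 {N : ℕ} (A : Matrix (Fin (N + 1)) (Fin (N + 1)) ℂ) (hA : A.IsHermitian)
    (v : Fin (N + 1) → EuclideanSpace ℂ (Fin (N + 1))) (μ : Fin (N + 1) → ℝ)
    (hON : Orthonormal ℂ v)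
    (heig : ∀ i, Matrix.toEuclideanLin A (v i) = (μ i : ℂ) • v i)
    (htop : ∀ i ≠ Fin.last N, |μ i| < |μ (Fin.last N)|)
    (hμN : μ (Fin.last N) ≠ 0)
    (φ : ℕ → EuclideanSpace ℂ (Fin (N + 1))) (hφ0 : ‖φ 0‖ = 1)
    (hc0 : ⟪v (Fin.last N), φ 0⟫_ℂ ≠ 0)
    (hnz : ∀ k, Matrix.toEuclideanLin A (φ k) ≠ 0)
    (hrec : ∀ k, φ (k + 1) =
      (1 / ‖Matrix.toEuclideanLin A (φ k)‖) • Matrix.toEuclideanLin A (φ k)) :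
    Filter.Tendsto (fun n => ‖⟪v (Fin.last N), φ n⟫_ℂ‖) Filter.atTop (nhds 1) ∧
    ∃ C : ℝ, ∀ n : ℕ,
      |1 - ‖⟪v (Fin.last N), φ n⟫_ℂ‖ ^ 2| ≤
        C * ((Finset.univ.sup' Finset.univ_nonempty
              (fun i => if i = Fin.last N then 0 else |μ i|)) /
            |μ (Fin.last N)|) ^ (2 * n) := by
  classical
  set T : EuclideanSpace ℂ (Fin (N+1)) →ₗ[ℂ] EuclideanSpace ℂ (Fin (N+1)) :=
    Matrix.toEuclideanLin A with hT
  have hsym : T.IsSymmetric := Matrix.isHermitian_iff_isSymmetric.mp hA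
  have hcard : Fintype.card (Fin (N+1)) = Module.finrank ℂ (EuclideanSpace ℂ (Fin (N+1))) := by
    simp
  have hspan : ⊤ ≤ Submodule.span ℂ (Set.range v) :=
    (hON.linearIndependent.span_eq_top_of_card_eq_finrank hcard).ge
  let b : OrthonormalBasis (Fin (N+1)) ℂ (EuclideanSpace ℂ (Fin (N+1))) :=
    OrthonormalBasis.mk hON hspan
  have hb : ⇑b = v := OrthonormalBasis.coe_mk hON hspan
  have parseval : ∀ x : EuclideanSpace ℂ (Fin (N+1)),
      ‖x‖^2 = ∑ i, ‖⟪v i, x⟫_ℂ‖^2 := by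
    intro x
    have h1 : ‖x‖ = ‖b.repr x‖ := (b.repr.norm_map x).symm
    rw [h1, EuclideanSpace.norm_eq, Real.sq_sqrt (by positivity)]
    refine Finset.sum_congr rfl fun i _ => ?_
    rw [b.repr_apply_apply, hb]
  have key : ∀ (n : ℕ) (i : Fin (N+1)) (x : EuclideanSpace ℂ (Fin (N+1))),
      ⟪v i, (T^n) x⟫_ℂ = (μ i : ℂ)^n * ⟪v i, x⟫_ℂ := by
    intro n
    induction n with
    | zero => intro i x; simp
    | succ n ih =>
      intro i x
      have h2 : (T^(n+1)) x = (T^n) (T x) := by rw [pow_succ]; rfl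
      rw [h2, ih, ← hsym (v i) x, heig i, inner_smul_left, Complex.conj_ofReal, pow_succ]
      ring
  set L := Fin.last N
  set c : Fin (N+1) → ℂ := fun i => ⟪v i, φ 0⟫_ℂ with hc
  -- T^n φ0 ≠ 0
  have hTn : ∀ n, (T^n) (φ 0) ≠ 0 := by
    intro n h0
    have := key n L (φ 0)
    rw [h0, inner_zero_right] at this
    exact hc0 (by
      rcases mul_eq_zero.mp this.symm with h | h
      · exact absurd (Complex.ofReal_eq_zero.mp (pow_eq_zero_iff' |>.mp h |>.1)) hμN
      · exact h)
  -- formula for φ n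
  have hφ : ∀ n, φ n = (‖(T^n) (φ 0)‖)⁻¹ • (T^n) (φ 0) := by
    intro n
    induction n with
    | zero => simp [hφ0]
    | succ n ih =>
      have hy : (T^n) (φ 0) ≠ 0 := hTn n
      have hTy : T ((T^n) (φ 0)) ≠ 0 := by
        have h2 : (T^(n+1)) (φ 0) = T ((T^n) (φ 0)) := by rw [pow_succ']; rfl
        rw [← h2]; exact hTn (n+1)
      have h2 : (T^(n+1)) (φ 0) = T ((T^n) (φ 0)) := by rw [pow_succ']; rfl
      have h3 : T (‖(T^n) (φ 0)‖⁻¹ • (T^n) (φ 0)) = ‖(T^n) (φ 0)‖⁻¹ • T ((T^n) (φ 0)) := by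
        rw [RCLike.real_smul_eq_coe_smul (K := ℂ), map_smul,
          RCLike.real_smul_eq_coe_smul (K := ℂ)]
      rw [hrec n, ih, h3, h2, norm_smul, smul_smul]
      congr 1
      have hny : (0:ℝ) < ‖(T^n) (φ 0)‖ := norm_pos_iff.mpr hy
      have hnTy : (0:ℝ) < ‖T ((T^n) (φ 0))‖ := norm_pos_iff.mpr hTy
      rw [Real.norm_eq_abs, abs_inv, abs_norm]
      field_simp
  -- norm squared of iterate
  set S : ℕ → ℝ := fun n => ∑ i, (μ i ^ 2)^n * ‖c i‖^2 with hSdef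
  have hS : ∀ n, ‖(T^n) (φ 0)‖^2 = S n := by
    intro n
    rw [parseval]
    refine Finset.sum_congr rfl fun i _ => ?_
    have e2 : ‖((μ i : ℂ))^n‖^2 = (μ i^2)^n := by
      rw [norm_pow, Complex.norm_real, Real.norm_eq_abs, ← pow_mul, mul_comm n 2,
        pow_mul, sq_abs]
    rw [key n i, norm_mul, mul_pow, e2]
  set P : ℕ → ℝ := fun n => (μ L ^ 2)^n * ‖c L‖^2 with hPdef
  have hcL : (0:ℝ) < ‖c L‖^2 := by
    have hne : c L ≠ 0 := hc0
    exact pow_pos (norm_pos_iff.mpr hne) 2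
  have hμ2 : (0:ℝ) < μ L ^ 2 := by
    rw [← sq_abs]; exact pow_pos (abs_pos.mpr hμN) 2
  have hP : ∀ n, 0 < P n := fun n => mul_pos (pow_pos hμ2 n) hcL
  have hPS : ∀ n, P n ≤ S n := by
    intro n
    have := Finset.single_le_sum (f := fun i => (μ i ^ 2)^n * ‖c i‖^2)
      (fun i _ => by positivity) (Finset.mem_univ L)
    exact this
  have hSpos : ∀ n, 0 < S n := fun n => lt_of_lt_of_le (hP n) (hPS n)
  -- value of a n
  have ha : ∀ n, ‖⟪v L, φ n⟫_ℂ‖^2 = P n / S n := by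
    intro n
    rw [hφ n, RCLike.real_smul_eq_coe_smul (K := ℂ), inner_smul_right, key n L,
      norm_mul, norm_mul, mul_pow, mul_pow]
    have e1 : ‖(RCLike.ofReal (K := ℂ) (‖(T^n) (φ 0)‖⁻¹))‖^2 = (S n)⁻¹ := by
      rw [RCLike.norm_ofReal, abs_inv, abs_norm, inv_pow, hS n]
    have e2 : ‖((μ L : ℂ))^n‖^2 = (μ L^2)^n := by
      rw [norm_pow, Complex.norm_real, Real.norm_eq_abs, ← pow_mul, mul_comm n 2,
        pow_mul, sq_abs]
    rw [e1, e2]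
    show (S n)⁻¹ * ((μ L^2)^n * ‖c L‖^2) = P n / S n
    rw [hPdef]; ring
  -- the max of the subdominant eigenvalues
  set M := Finset.univ.sup' Finset.univ_nonempty (fun i => if i = L then 0 else |μ i|)
    with hM
  have hM0 : (0:ℝ) ≤ M := by
    have h := Finset.le_sup' (fun i => if i = L then 0 else |μ i|) (Finset.mem_univ L)
    rw [if_pos rfl] at h
    exact h
  have hMi : ∀ i, i ≠ L → |μ i| ≤ M := by
    intro i hi
    have h := Finset.le_sup' (fun i => if i = L then 0 else |μ i|) (Finset.mem_univ i)
    rw [if_neg hi] at h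
    exact h
  have hμLpos : (0:ℝ) < |μ L| := abs_pos.mpr hμN
  have hMlt : M < |μ L| := by
    rw [hM, Finset.sup'_lt_iff]
    intro i _
    by_cases h : i = L
    · simpa [h] using hμLpos
    · simpa [h] using htop i h
  set r : ℝ := M / |μ L| with hr
  have hr0 : 0 ≤ r := div_nonneg hM0 (abs_nonneg _)
  have hr1 : r < 1 := (div_lt_one hμLpos).mpr hMlt
  set B : ℝ := ∑ i ∈ Finset.univ.erase L, ‖c i‖^2 with hB
  have hB0 : 0 ≤ B := Finset.sum_nonneg fun i _ => by positivity
  set C : ℝ := B / ‖c L‖^2 with hC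
  have hC0 : 0 ≤ C := div_nonneg hB0 hcL.le
  have hrpow : ∀ n, C * r^(2*n) = ((M^2)^n * B) / P n := by
    intro n
    rw [hr, pow_mul, div_pow, sq_abs, hPdef, hC]
    rw [div_pow, div_mul_div_comm]
    ring
  have hbound : ∀ n, |1 - ‖⟪v L, φ n⟫_ℂ‖^2| ≤ C * r^(2*n) := by
    intro n
    rw [ha n]
    have h1 : P n / S n ≤ 1 := (div_le_one (hSpos n)).mpr (hPS n)
    rw [abs_of_nonneg (sub_nonneg.mpr h1), one_sub_div (hSpos n).ne']
    have hsplit : S n - P n = ∑ i ∈ Finset.univ.erase L, (μ i^2)^n * ‖c i‖^2 := by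
      have := Finset.add_sum_erase Finset.univ (fun i => (μ i^2)^n * ‖c i‖^2)
        (Finset.mem_univ L)
      rw [hSdef, hPdef]
      simp only at this ⊢
      linarith [this]
    have hnum : S n - P n ≤ (M^2)^n * B := by
      rw [hsplit, hB, Finset.mul_sum]
      refine Finset.sum_le_sum fun i hi => ?_
      have hiL : i ≠ L := Finset.ne_of_mem_erase hi
      have : μ i ^ 2 ≤ M ^ 2 := by
        rw [← sq_abs]
        exact pow_le_pow_left₀ (abs_nonneg _) (hMi i hiL) 2
      exact mul_le_mul_of_nonneg_right (pow_le_pow_left₀ (sq_nonneg _) this n)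
        (by positivity)
    have hnn : 0 ≤ S n - P n := sub_nonneg.mpr (hPS n)
    calc (S n - P n) / S n ≤ (S n - P n) / P n :=
          div_le_div_of_nonneg_left hnn (hP n) (hPS n)
      _ ≤ ((M^2)^n * B) / P n := (div_le_div_iff_of_pos_right (hP n)).mpr hnum
      _ = C * r^(2*n) := (hrpow n).symm
  have hgeo : Filter.Tendsto (fun n => C * r^(2*n)) Filter.atTop (nhds 0) := by
    have h2 : Filter.Tendsto (fun n : ℕ => (r^2)^n) Filter.atTop (nhds 0) :=
      tendsto_pow_atTop_nhds_zero_of_lt_one (by positivity)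
        (by nlinarith)
    have := h2.const_mul C
    simpa [pow_mul] using this
  have hsub : Filter.Tendsto (fun n => 1 - ‖⟪v L, φ n⟫_ℂ‖^2) Filter.atTop (nhds 0) :=
    squeeze_zero_norm (fun n => by simpa [Real.norm_eq_abs] using hbound n) hgeo
  have hx : Filter.Tendsto (fun n => ‖⟪v L, φ n⟫_ℂ‖^2) Filter.atTop (nhds 1) := by
    have h2 := (tendsto_const_nhds (x := (1:ℝ))
      (f := (Filter.atTop : Filter ℕ))).sub hsub
    simp only [sub_sub_cancel, sub_zero] at h2
    exact h2
  constructor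
  · have hsq : (fun n => ‖⟪v L, φ n⟫_ℂ‖)
        = fun n => Real.sqrt (‖⟪v L, φ n⟫_ℂ‖^2) := by
      funext n; rw [Real.sqrt_sq (norm_nonneg _)]
    rw [hsq]
    simpa [Real.sqrt_one] using hx.sqrt
  · exact ⟨C, hbound⟩
end
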